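/- In the free group F₂ on α, β, for every nonnegative integer r, the number of elements of word length exactly 2r+1 that are conjugates of a power of α, a power of β, or a power of αβ is 4·3^r. -/

import Mathlib

/-!
Conjugating `of x ^ k` by a letter `x^{±1}` changes nothing, so every conjugate of a nontrivial
power of a generator `x` can be written as `u x^k u⁻¹` with `u` reduced and not ending in `x^{±1}`;
this word is then reduced, of length `2|u| + |k|`. The elements of length `2r + 1` among them are
thus the words `u y^(2n+1) u⁻¹` with `|u| + n = r`, and keeping their first `r + 1` letters
`u y^(n+1)` is a bijection onto the reduced words of length `r + 1` (the inverse splits off the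
final run of equal letters), of which there are `4 · 3^r`. Conjugates of powers of `αβ` do not
contribute: length modulo 2 is a homomorphism, so they all have even length.
-/

abbrev F2 := FreeGroup (Fin 2)

def α : F2 := FreeGroup.of 0

def β : F2 := FreeGroup.of 1

open List

namespace List

variable {X : Type*}

theorem rdropWhile_append_replicate_eq {p : X → Bool} {u : List X} {y : X} (hy : p y)
    (hu : ∀ a ∈ u.getLast?, ¬ p a) (n : ℕ) : (u ++ replicate n y).rdropWhile p = u := by
  induction n with
  | zero =>
    rw [replicate_zero, append_nil, rdropWhile_eq_self_iff]
    exact fun hne => hu _ (getLast?_eq_some_getLast hne)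
  | succ n ih => rw [replicate_succ', ← append_assoc, rdropWhile_concat_pos _ _ _ hy, ih]

theorem append_replicate_inj [DecidableEq X] {u u' : List X} {y y' : X} {n n' : ℕ}
    (hu : ∀ a ∈ u.getLast?, a ≠ y) (hu' : ∀ a ∈ u'.getLast?, a ≠ y')
    (h : u ++ replicate (n + 1) y = u' ++ replicate (n' + 1) y') : u = u' ∧ y = y' ∧ n = n' := by
  have hy : y = y' := by simpa [getLast?_append, getLast?_replicate] using congrArg getLast? h
  subst hy
  have hdrop := congrArg (rdropWhile (· == y)) h
  rw [rdropWhile_append_replicate_eq (by simp) (by simpa using hu),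
    rdropWhile_append_replicate_eq (by simp) (by simpa using hu')] at hdrop
  subst hdrop
  simpa using congrArg length h

theorem exists_eq_append_replicate [DecidableEq X] {L : List X} (hL : L ≠ []) :
    ∃ u y n, (∀ a ∈ u.getLast?, a ≠ y) ∧ L = u ++ replicate (n + 1) y := by
  set y := L.getLast hL
  have hrun : L.rtakeWhile (· == y) = replicate (L.rtakeWhile (· == y)).length y :=
    eq_replicate_iff.2 ⟨rfl, fun a ha => by simpa using mem_rtakeWhile_imp ha⟩
  obtain ⟨n, hn⟩ : ∃ n, (L.rtakeWhile (· == y)).length = n + 1 := by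
    refine Nat.exists_eq_add_one.2 (List.length_pos_iff.2 ?_)
    rw [Ne, rtakeWhile_eq_nil_iff]
    simp [y, hL]
  refine ⟨L.rdropWhile (· == y), y, n, fun a ha => ?_, ?_⟩
  · have hne : L.rdropWhile (· == y) ≠ [] := by rintro h; simp [h] at ha
    rw [getLast?_eq_some_getLast hne, Option.mem_some_iff] at ha
    subst ha
    simpa using rdropWhile_last_not _ _ hne
  · rw [← hn, ← hrun, rdropWhile_append_rtakeWhile]

theorem take_append_replicate_append (u v : List X) (y : X) (n : ℕ) :
    (u ++ replicate (2 * n + 1) y ++ v).take (u.length + n + 1) = u ++ replicate (n + 1) y := by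
  rw [show 2 * n + 1 = (n + 1) + n by ring, replicate_add, append_assoc, append_assoc,
    add_assoc, take_length_add_append, take_left' (by simp)]

end List

namespace FreeGroup

variable {A : Type*}

theorem mk_replicate (n : ℕ) (y : A × Bool) : mk (replicate n y) = mk [y] ^ n := by
  induction n with
  | zero => rfl
  | succ n ih => rw [replicate_succ', ← mul_mk, ih, pow_succ]

theorem mk_singleton_false (x : A) : mk [(x, false)] = (of x)⁻¹ := by
  rw [of, inv_mk]
  rfl

theorem of_zpow_eq_mk_replicate (x : A) (k : ℤ) :
    of x ^ k = mk (replicate k.natAbs (x, decide (0 ≤ k))) := by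
  cases k with
  | ofNat n => simp only [Int.ofNat_eq_natCast, zpow_natCast, mk_replicate]; simp [of]
  | negSucc n =>
    simp only [zpow_negSucc, mk_replicate, Int.natAbs_negSucc]
    simp [mk_singleton_false, inv_pow]

theorem exists_zpow_eq_mk_replicate (n : ℕ) (y : A × Bool) :
    ∃ k : ℤ, of y.1 ^ k = mk (replicate n y) := by
  obtain ⟨x, _ | _⟩ := y
  · exact ⟨-n, by rw [mk_replicate, mk_singleton_false, inv_pow, zpow_neg, zpow_natCast]⟩
  · exact ⟨n, by rw [mk_replicate, zpow_natCast]; rfl⟩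

theorem mk_mem_zpowers_of {x : A} {L : List (A × Bool)} (h : ∀ a ∈ L, a.1 = x) :
    mk L ∈ Subgroup.zpowers (of x) := by
  induction L with
  | nil => exact Subgroup.one_mem _
  | cons a L ih =>
    rw [← singleton_append, ← mul_mk]
    refine Subgroup.mul_mem _ ?_ (ih fun b hb => h b (mem_cons_of_mem a hb))
    obtain ⟨y, b⟩ := a
    obtain rfl : y = x := h _ mem_cons_self
    cases b
    · rw [mk_singleton_false]
      exact Subgroup.inv_mem _ (Subgroup.mem_zpowers _)
    · exact Subgroup.mem_zpowers _

theorem IsReduced.append_replicate {u : List (A × Bool)} {y : A × Bool} (hu : IsReduced u)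
    (hy : ∀ a ∈ u.getLast?, a.1 ≠ y.1) (n : ℕ) : IsReduced (u ++ replicate n y) := by
  refine isChain_append.2 ⟨hu, isChain_replicate_of_rel _ fun _ => rfl, fun a ha b hb h => ?_⟩
  obtain rfl := eq_of_mem_replicate (mem_of_mem_head? hb)
  exact absurd h (hy a ha)

theorem isConj_mk_append_replicate_append_invRev (u : List (A × Bool)) (y : A × Bool) (n : ℕ) :
    ∃ k : ℤ, IsConj (of y.1 ^ k) (mk (u ++ replicate n y ++ invRev u)) := by
  obtain ⟨k, hk⟩ := exists_zpow_eq_mk_replicate n y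
  exact ⟨k, isConj_iff.2 ⟨mk u, by rw [hk, inv_mk, mul_mk, mul_mk]⟩⟩

theorem setOf_isReduced_length_add_two_head (a : A × Bool) (n : ℕ) :
    {L | IsReduced L ∧ L.length = n + 2 ∧ L.head? = some a} =
      (a :: ·) '' ({L | IsReduced L ∧ L.length = n + 1} \
        {L | IsReduced L ∧ L.length = n + 1 ∧ L.head? = some (a.1, !a.2)}) := by
  ext L
  constructor
  · rintro ⟨hL, hlen, hhead⟩
    obtain ⟨b, L, rfl⟩ := exists_cons_of_length_eq_add_one hlen
    obtain rfl : b = a := Option.some_injective _ hhead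
    refine ⟨L, ⟨⟨hL.infix (suffix_cons _ _).isInfix, by simpa using hlen⟩, ?_⟩, rfl⟩
    rintro ⟨-, -, hhead'⟩
    simpa using (isChain_cons.1 hL).1 _ hhead' rfl
  · rintro ⟨L, ⟨⟨hL, hlen⟩, hhead⟩, rfl⟩
    refine ⟨isChain_cons.2 ⟨fun b hb h => ?_, hL⟩, by simpa using hlen, rfl⟩
    by_contra h2
    refine hhead ⟨hL, hlen, ?_⟩
    rw [hb]
    obtain ⟨b1, b2⟩ := b
    simp_all

section Count

variable [Fintype A]

theorem ncard_setOf_isReduced_length (n : ℕ) :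
    {L : List (A × Bool) | IsReduced L ∧ L.length = n + 1}.ncard =
      ∑ a : A × Bool, {L | IsReduced L ∧ L.length = n + 1 ∧ L.head? = some a}.ncard := by
  have hunion : {L : List (A × Bool) | IsReduced L ∧ L.length = n + 1} =
      ⋃ a, {L | IsReduced L ∧ L.length = n + 1 ∧ L.head? = some a} := by
    ext L
    simp only [Set.mem_ofPred_eq, Set.mem_iUnion, exists_and_left, ← Option.isSome_iff_exists,
      isSome_head?]
    exact and_congr_right fun _ => (and_iff_left_of_imp ne_nil_of_length_eq_add_one).symm
  rw [hunion, Set.ncard_iUnion_of_finite, finsum_eq_sum_of_fintype]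
  · exact fun a => (finite_length_eq _ _).subset fun L hL => hL.2.1
  · intro a b hab
    exact Set.disjoint_left.2 fun L ha hb =>
      hab (Option.some_injective _ (ha.2.2.symm.trans hb.2.2))

theorem ncard_setOf_isReduced_length_head (n : ℕ) (a : A × Bool) :
    {L | IsReduced L ∧ L.length = n + 1 ∧ L.head? = some a}.ncard =
      (Fintype.card (A × Bool) - 1) ^ n := by
  induction n generalizing a with
  | zero =>
    suffices {L | IsReduced L ∧ L.length = 1 ∧ L.head? = some a} = {[a]} by
      rw [this, Set.ncard_singleton, pow_zero]
    ext L
    constructor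
    · rintro ⟨-, hlen, hhead⟩
      obtain ⟨b, rfl⟩ := length_eq_one_iff.1 hlen
      obtain rfl : b = a := Option.some_injective _ hhead
      rfl
    · rintro rfl
      exact ⟨IsReduced.singleton, rfl, rfl⟩
  | succ n ih =>
    rw [setOf_isReduced_length_add_two_head, Set.ncard_image_of_injective _ cons_injective,
      Set.ncard_sdiff (by exact fun _ hL => ⟨hL.1, hL.2.1⟩)
        (by exact (finite_length_eq _ _).subset fun _ hL => hL.2.1),
      ncard_setOf_isReduced_length]
    simp only [ih, Finset.sum_const, Finset.card_univ, smul_eq_mul]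
    rw [pow_succ', Nat.sub_one_mul]

theorem ncard_setOf_isReduced_length_succ (n : ℕ) :
    {L : List (A × Bool) | IsReduced L ∧ L.length = n + 1}.ncard =
      Fintype.card (A × Bool) * (Fintype.card (A × Bool) - 1) ^ n := by
  simp only [ncard_setOf_isReduced_length, ncard_setOf_isReduced_length_head, Finset.sum_const,
    Finset.card_univ, smul_eq_mul]

end Count

def normParity : FreeGroup A →* Multiplicative (ZMod 2) :=
  lift fun _ => Multiplicative.ofAdd 1

variable [DecidableEq A]

theorem normParity_apply (g : FreeGroup A) :
    normParity g = Multiplicative.ofAdd (g.norm : ZMod 2) := by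
  have hletter : ∀ b : Bool,
      cond b (Multiplicative.ofAdd (1 : ZMod 2)) (Multiplicative.ofAdd 1)⁻¹ =
        Multiplicative.ofAdd 1 := by decide
  conv_lhs => rw [← mk_toWord (x := g)]
  simp [normParity, lift_mk, hletter, norm, ← ofAdd_nsmul]

theorem even_norm_of_isConj {h g : FreeGroup A} {k : ℤ} (hh : Even h.norm)
    (hc : IsConj (h ^ k) g) : Even g.norm := by
  have := isConj_iff_eq.1 (normParity.map_isConj hc)
  rwa [map_zpow, normParity_apply, normParity_apply, hh.natCast_zmod_two, ofAdd_zero, one_zpow,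
    eq_comm, ofAdd_eq_one, ZMod.natCast_eq_zero_iff_even] at this

theorem IsReduced.invRev {L : List (A × Bool)} (h : IsReduced L) :
    IsReduced (invRev L) := by
  rw [← h.reduce_eq, ← toWord_mk, ← toWord_inv]
  exact isReduced_toWord

theorem IsReduced.append_replicate_append_invRev {u : List (A × Bool)}
    {y : A × Bool} (hu : IsReduced u) (hy : ∀ a ∈ u.getLast?, a.1 ≠ y.1) {n : ℕ} (hn : n ≠ 0) :
    IsReduced (u ++ replicate n y ++ FreeGroup.invRev u) := by
  refine (hu.append_replicate hy n).append_overlap ?_ (by simpa using hn)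
  simpa [FreeGroup.invRev] using (hu.append_replicate (y := (y.1, !y.2)) hy n).invRev

theorem exists_isReduced_conj_eq (w : FreeGroup A) (x : A) (k : ℤ) :
    ∃ u : List (A × Bool), IsReduced u ∧ (∀ a ∈ u.getLast?, a.1 ≠ x) ∧
      w * of x ^ k * w⁻¹ = mk u * of x ^ k * (mk u)⁻¹ := by
  set p : A × Bool → Bool := fun a => decide (a.1 = x)
  obtain ⟨j, hj⟩ := Subgroup.mem_zpowers_iff.1 <|
    mk_mem_zpowers_of (L := w.toWord.rtakeWhile p) fun a ha => by
      simpa [p] using mem_rtakeWhile_imp ha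
  have hw : w = mk (w.toWord.rdropWhile p) * of x ^ j := by
    rw [hj, mul_mk, rdropWhile_append_rtakeWhile, mk_toWord]
  refine ⟨w.toWord.rdropWhile p, isReduced_toWord.infix (rdropWhile_prefix _ _).isInfix,
    fun a ha => ?_, ?_⟩
  · have hne : w.toWord.rdropWhile p ≠ [] := by rintro h; simp [h] at ha
    rw [getLast?_eq_some_getLast hne, Option.mem_some_iff] at ha
    subst ha
    simpa [p] using rdropWhile_last_not _ _ hne
  · conv_lhs => rw [hw]
    group

theorem exists_toWord_eq_of_isConj {x : A} {k : ℤ} {g : FreeGroup A} (h : IsConj (of x ^ k) g)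
    (hk : k ≠ 0) : ∃ (u : List (A × Bool)) (y : A × Bool), IsReduced u ∧
      (∀ a ∈ u.getLast?, a.1 ≠ y.1) ∧ g.toWord = u ++ replicate k.natAbs y ++ invRev u := by
  obtain ⟨w, rfl⟩ := isConj_iff.1 h
  obtain ⟨u, hu, hlast, hconj⟩ := exists_isReduced_conj_eq w x k
  refine ⟨u, (x, decide (0 ≤ k)), hu, hlast, ?_⟩
  rw [hconj, of_zpow_eq_mk_replicate, inv_mk, mul_mk, mul_mk, toWord_mk,
    (hu.append_replicate_append_invRev hlast (Int.natAbs_ne_zero.2 hk)).reduce_eq]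

theorem norm_eq_and_isConj_iff {g : FreeGroup A} {r : ℕ} :
    (g.norm = 2 * r + 1 ∧ ∃ (x : A) (k : ℤ), IsConj (of x ^ k) g) ↔
      ∃ (u : List (A × Bool)) (y : A × Bool) (n : ℕ), IsReduced u ∧
        (∀ a ∈ u.getLast?, a.1 ≠ y.1) ∧ u.length + n = r ∧
        g.toWord = u ++ replicate (2 * n + 1) y ++ invRev u := by
  constructor
  · rintro ⟨hnorm, x, k, hconj⟩
    have hk : k ≠ 0 := by
      rintro rfl
      rw [zpow_zero, isConj_one_right] at hconj
      rw [hconj, norm_one] at hnorm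
      omega
    obtain ⟨u, y, hu, hlast, hword⟩ := exists_toWord_eq_of_isConj hconj hk
    have hlen : 2 * u.length + k.natAbs = 2 * r + 1 := by
      rw [← hnorm, norm, hword]
      simp only [length_append, length_replicate, invRev_length]
      ring
    refine ⟨u, y, r - u.length, hu, hlast, by omega, ?_⟩
    rwa [show 2 * (r - u.length) + 1 = k.natAbs by omega]
  · rintro ⟨u, y, n, hu, hlast, hlen, hword⟩
    refine ⟨?_, y.1, ?_⟩
    · rw [norm, hword]
      simp only [length_append, length_replicate, invRev_length]
      omega
    · rw [← mk_toWord (x := g), hword]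
      exact isConj_mk_append_replicate_append_invRev u y _

theorem injOn_take_toWord (r : ℕ) :
    {g : FreeGroup A | g.norm = 2 * r + 1 ∧ ∃ (x : A) (k : ℤ), IsConj (of x ^ k) g}.InjOn
      fun g => g.toWord.take (r + 1) := by
  intro g hg g' hg' heq
  obtain ⟨u, y, n, -, hlast, hlen, hword⟩ := norm_eq_and_isConj_iff.1 hg
  obtain ⟨u', y', n', -, hlast', hlen', hword'⟩ := norm_eq_and_isConj_iff.1 hg'
  have hhalf : u ++ replicate (n + 1) y = u' ++ replicate (n' + 1) y' := by
    rw [← take_append_replicate_append u (invRev u), ← take_append_replicate_append u' (invRev u'),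
      ← hword, ← hword', hlen, hlen']
    exact heq
  obtain ⟨rfl, rfl, rfl⟩ := append_replicate_inj (fun a ha h => hlast a ha (congrArg Prod.fst h))
    (fun a ha h => hlast' a ha (congrArg Prod.fst h)) hhalf
  exact toWord_injective (hword.trans hword'.symm)

theorem image_take_toWord (r : ℕ) :
    (fun g => g.toWord.take (r + 1)) ''
        {g : FreeGroup A | g.norm = 2 * r + 1 ∧ ∃ (x : A) (k : ℤ), IsConj (of x ^ k) g} =
      {L | IsReduced L ∧ L.length = r + 1} := by
  ext L
  constructor
  · rintro ⟨g, ⟨hnorm, -⟩, rfl⟩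
    refine ⟨isReduced_toWord.infix (take_prefix _ _).isInfix, ?_⟩
    rw [length_take, ← norm, hnorm]
    omega
  · rintro ⟨hL, hlen⟩
    obtain ⟨u, y, n, hlast, rfl⟩ := exists_eq_append_replicate (ne_nil_of_length_eq_add_one hlen)
    have hlast' : ∀ a ∈ u.getLast?, a.1 ≠ y.1 := by
      intro a ha h
      exact hlast a ha (Prod.ext h ((isChain_append.1 hL).2.2 a ha y rfl h))
    have hu : IsReduced u := hL.infix (prefix_append _ _).isInfix
    have hword : (mk (u ++ replicate (2 * n + 1) y ++ invRev u)).toWord =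
        u ++ replicate (2 * n + 1) y ++ invRev u := by
      rw [toWord_mk, (hu.append_replicate_append_invRev hlast' (by omega)).reduce_eq]
    have hr : u.length + n = r := by
      simp only [length_append, length_replicate] at hlen
      omega
    refine ⟨_, norm_eq_and_isConj_iff.2 ⟨u, y, n, hu, hlast', hr, hword⟩, ?_⟩
    simp only [hword, ← hr, take_append_replicate_append]

theorem ncard_setOf_norm_eq_and_isConj [Fintype A] (r : ℕ) :
    {g : FreeGroup A | g.norm = 2 * r + 1 ∧ ∃ (x : A) (k : ℤ), IsConj (of x ^ k) g}.ncard =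
      Fintype.card (A × Bool) * (Fintype.card (A × Bool) - 1) ^ r := by
  rw [← (injOn_take_toWord r).ncard_image, image_take_toWord, ncard_setOf_isReduced_length_succ]

end FreeGroup

/-- The number of elements of word length exactly `2r+1` conjugate to a power of
`α`, `β`, or `αβ` is `4·3^r`. -/
theorem card_reducible_odd (r : ℕ) :
    Nat.card {g : F2 | FreeGroup.norm g = 2 * r + 1 ∧
      ∃ (w : F2) (k : ℤ) (γ : F2), γ ∈ ({α, β, α * β} : Set F2) ∧
        g = w * γ ^ k * w⁻¹} = 4 * 3 ^ r := by
  have hset : {g : F2 | FreeGroup.norm g = 2 * r + 1 ∧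
      ∃ (w : F2) (k : ℤ) (γ : F2), γ ∈ ({α, β, α * β} : Set F2) ∧ g = w * γ ^ k * w⁻¹} =
      {g : F2 | g.norm = 2 * r + 1 ∧ ∃ (x : Fin 2) (k : ℤ), IsConj (FreeGroup.of x ^ k) g} := by
    ext g
    refine and_congr_right fun hnorm => ⟨?_, ?_⟩
    · rintro ⟨w, k, γ, hγ, rfl⟩
      rcases hγ with rfl | rfl | rfl
      · exact ⟨0, k, isConj_iff.2 ⟨w, rfl⟩⟩
      · exact ⟨1, k, isConj_iff.2 ⟨w, rfl⟩⟩
      · have heven : Even (FreeGroup.norm (w * (α * β) ^ k * w⁻¹)) :=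
          FreeGroup.even_norm_of_isConj (by decide) (isConj_iff.2 ⟨w, rfl⟩)
        simp [hnorm] at heven
    · rintro ⟨x, k, hconj⟩
      obtain ⟨w, rfl⟩ := isConj_iff.1 hconj
      refine ⟨w, k, FreeGroup.of x, ?_, rfl⟩
      fin_cases x <;> simp [α, β]
  rw [Nat.card_coe_set_eq, hset, FreeGroup.ncard_setOf_norm_eq_and_isConj]
  simp
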